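/- Let λ, λ' ∈ ℚ_p× with ac_m(λ) ≠ ac_m(λ') and ord λ = ord λ' = 0. Let σ, ζ ∈ ℚ_p with γ₀ := ord(σ − ζ), and suppose t ∈ ℚ_p satisfies ord(t−σ) = ord(t−ζ) ≤ γ₀ − m and ac_m(t−σ) = ac_m(λ). Then ac_m(t−ζ) = ac_m(λ), and hence ac_m(t−ζ) ≠ ac_m(λ'). -/

import Mathlib

open scoped Classical

namespace PaperCD

variable (p : ℕ) [hp : Fact p.Prime]

/-- The unit part of a nonzero `p`-adic number: `x * p^(-ord x)`, an element of `ℤ_[p]`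
of norm one; `0` is sent to `0`. -/
noncomputable def unitPart (x : ℚ_[p]) : ℤ_[p] :=
  if h : x = 0 then 0 else
    ⟨x * (p : ℚ_[p]) ^ (-x.valuation), by
      have hp0 : (p : ℝ) ≠ 0 := by exact_mod_cast hp.out.ne_zero
      have hx : ‖x * (p : ℚ_[p]) ^ (-x.valuation)‖ = 1 := by
        rw [norm_mul, Padic.norm_p_zpow, Padic.norm_eq_zpow_neg_valuation h, neg_neg,
          ← zpow_add₀ hp0]
        simp
      exact le_of_eq hx⟩

/-- The angular component map of level `m`: `ac_m(x) = x·p^(-ord x) mod p^m`,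
with `ac m 0 = 0`. -/
noncomputable def ac (m : ℕ) (x : ℚ_[p]) : ZMod (p ^ m) :=
  PadicInt.toZModPow m (unitPart p x)

/-- The closed ball of (valuative) radius `γ` around `a` in `ℚ_[p]`:
`{t | ord (t - a) ≥ γ}`. -/
def pball (γ : ℤ) (a : ℚ_[p]) : Set ℚ_[p] := {t | ‖t - a‖ ≤ (p : ℝ) ^ (-γ)}

end PaperCD

open PaperCD

/-! The unit parts of `t - σ` and `t - ζ` differ by `(σ - ζ) p^(-ord (t - ζ))`, which has
valuation at least `m` below the branching height, so they agree modulo `p^m`. -/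

namespace PadicInt

variable {p : ℕ} [Fact p.Prime]

theorem toZModPow_eq_of_norm_sub_le {z w : ℤ_[p]} {m : ℕ}
    (h : ‖z - w‖ ≤ (p : ℝ) ^ (-(m : ℤ))) : toZModPow m z = toZModPow m w := by
  rw [← sub_eq_zero, ← map_sub, ← RingHom.mem_ker, ker_toZModPow]
  exact (norm_le_pow_iff_mem_span_pow _ m).mp h

end PadicInt

namespace PaperCD

variable {p : ℕ} [Fact p.Prime]

theorem coe_unitPart {x : ℚ_[p]} (hx : x ≠ 0) :
    (unitPart p x : ℚ_[p]) = x * (p : ℚ_[p]) ^ (-x.valuation) := by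
  simp [unitPart, hx]

theorem norm_unitPart_sub_unitPart {x y : ℚ_[p]} (hx : x ≠ 0) (hy : y ≠ 0)
    (hv : x.valuation = y.valuation) :
    ‖unitPart p x - unitPart p y‖ = ‖x - y‖ * (p : ℝ) ^ x.valuation := by
  rw [PadicInt.norm_def, PadicInt.coe_sub, coe_unitPart hx, coe_unitPart hy, ← hv, ← sub_mul,
    norm_mul, Padic.norm_p_zpow, neg_neg]

theorem ac_eq_of_norm_sub_le {x y : ℚ_[p]} {m : ℕ} (hx : x ≠ 0) (hy : y ≠ 0)
    (hv : x.valuation = y.valuation) (hxy : ‖x - y‖ ≤ ‖x‖ * (p : ℝ) ^ (-(m : ℤ))) :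
    ac p m x = ac p m y := by
  have hp : (0 : ℝ) < p := by exact_mod_cast (Fact.out : p.Prime).pos
  apply PadicInt.toZModPow_eq_of_norm_sub_le
  rw [norm_unitPart_sub_unitPart hx hy hv]
  calc ‖x - y‖ * (p : ℝ) ^ x.valuation
      ≤ ‖x‖ * (p : ℝ) ^ (-(m : ℤ)) * (p : ℝ) ^ x.valuation := by gcongr
    _ = (p : ℝ) ^ (-(m : ℤ)) := by
      rw [Padic.norm_eq_zpow_neg_valuation hx, mul_right_comm, ← zpow_add₀ hp.ne',
        neg_add_cancel, zpow_zero, one_mul]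

end PaperCD

theorem same_ac_far_below_branching_general (p m : ℕ) [Fact p.Prime]
    (σ ζ t lam lam' : ℚ_[p])
    (hacne : ac p m lam ≠ ac p m lam')
    (hσζ : σ ≠ ζ) (htσ : t ≠ σ) (htζ : t ≠ ζ)
    (heq : (t - σ).valuation = (t - ζ).valuation)
    (hle : (t - σ).valuation ≤ (σ - ζ).valuation - m)
    (hac : ac p m (t - σ) = ac p m lam) :
    ac p m (t - ζ) = ac p m lam ∧ ac p m (t - ζ) ≠ ac p m lam' := by
  have hp : (1 : ℝ) ≤ p := by exact_mod_cast (Fact.out : p.Prime).one_lt.le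
  have htζ' : t - ζ ≠ 0 := sub_ne_zero.mpr htζ
  have hsame : ac p m (t - ζ) = ac p m (t - σ) := by
    refine ac_eq_of_norm_sub_le htζ' (sub_ne_zero.mpr htσ) heq.symm ?_
    rw [sub_sub_sub_cancel_left, Padic.norm_eq_zpow_neg_valuation (sub_ne_zero.mpr hσζ),
      Padic.norm_eq_zpow_neg_valuation htζ', ← zpow_add₀ (by positivity)]
    exact zpow_le_zpow_right₀ hp (by omega)
  exact ⟨hsame.trans hac, hsame ▸ hac ▸ hacne⟩

theorem same_ac_far_below_branching (p m : ℕ) [Fact p.Prime] (hm : 1 ≤ m)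
    (σ ζ t lam lam' : ℚ_[p])
    (hlam : lam ≠ 0) (hlam' : lam' ≠ 0)
    (hvl : lam.valuation = 0) (hvl' : lam'.valuation = 0)
    (hacne : ac p m lam ≠ ac p m lam')
    (hσζ : σ ≠ ζ) (htσ : t ≠ σ) (htζ : t ≠ ζ)
    (heq : (t - σ).valuation = (t - ζ).valuation)
    (hle : (t - σ).valuation ≤ (σ - ζ).valuation - m)
    (hac : ac p m (t - σ) = ac p m lam) :
    ac p m (t - ζ) = ac p m lam ∧ ac p m (t - ζ) ≠ ac p m lam' :=
  same_ac_far_below_branching_general p m σ ζ t lam lam' hacne hσζ htσ htζ heq hle hac
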